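/- Let d ≥ 3 be a divisor of m and let R ∈ E(K̄) be a point of exact order m (i.e. of additive order m in the group E(K̄)). Then K(x(R), y(R)) = K(x(R), y((m/d)·R)), where x(·) and y(·) denote the coordinates of a point. In particular, if K = K(E[d]) (the coordinates of all d-torsion points already lie in K), then K(x(R), y(R)) = K(x(R)). -/

import Mathlib

/-- The short Weierstrass curve `y² = x³ + A·x + B` base-changed to `F`: its coefficients are
the images under `algebraMap K F` of `A, B ∈ K`. -/
def baseW (K F : Type*) [Field K] [Field F] [Algebra K F] (A B : K) :
    WeierstrassCurve.Affine F :=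
  { a₁ := 0, a₂ := 0, a₃ := 0, a₄ := algebraMap K F A, a₆ := algebraMap K F B }

open Classical in
/-- `K(E[m])`: the intermediate field of `F/K` generated by the coordinates of all `m`-torsion
points of the curve `W`. -/
noncomputable def torsionField (K : Type*) {F : Type*} [Field K] [Field F] [Algebra K F]
    (W : WeierstrassCurve.Affine F) (m : ℕ) : IntermediateField K F :=
  IntermediateField.adjoin K
    {c | ∃ (x y : F) (h : W.Nonsingular x y),
      m • (WeierstrassCurve.Affine.Point.some _ _ h : WeierstrassCurve.Affine.Point W) = 0 ∧
      (c = x ∨ c = y)}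

open Classical in
/-- `K_{m,x}`: the intermediate field of `F/K` generated by the x-coordinates of all `m`-torsion
points of the curve `W`. -/
noncomputable def torsionXField (K : Type*) {F : Type*} [Field K] [Field F] [Algebra K F]
    (W : WeierstrassCurve.Affine F) (m : ℕ) : IntermediateField K F :=
  IntermediateField.adjoin K
    {c | ∃ (y : F) (h : W.Nonsingular c y),
      m • (WeierstrassCurve.Affine.Point.some _ _ h : WeierstrassCurve.Affine.Point W) = 0}

open Classical in
/-- `P, Q` form a `ℤ/mℤ`-basis of the `m`-torsion subgroup `E[m]`. -/
def IsTorsionBasis {F : Type*} [Field F] {W : WeierstrassCurve.Affine F}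
    (m : ℕ) (P Q : WeierstrassCurve.Affine.Point W) : Prop :=
  m • P = 0 ∧ m • Q = 0 ∧
  (∀ R : WeierstrassCurve.Affine.Point W, m • R = 0 → ∃ a b : ℤ, R = a • P + b • Q) ∧
  (∀ a b : ℤ, a • P + b • Q = 0 → (m : ℤ) ∣ a ∧ (m : ℤ) ∣ b)

open Classical in
/-- The coordinatewise Galois action: the automorphism `σ` sends the point `P` to the point
`Q`. -/
def galSends {K F : Type*} [Field K] [Field F] [Algebra K F] {W : WeierstrassCurve.Affine F}
    (σ : F ≃ₐ[K] F) (P Q : WeierstrassCurve.Affine.Point W) : Prop :=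
  (P = 0 ∧ Q = 0) ∨
  (∃ (x y x' y' : F) (h : W.Nonsingular x y) (h' : W.Nonsingular x' y'),
    P = WeierstrassCurve.Affine.Point.some _ _ h ∧ Q = WeierstrassCurve.Affine.Point.some _ _ h' ∧
    σ x = x' ∧ σ y = y')

/-!
Put `S = (m / d) • R`. The coordinates of `S` are rational functions of those of `R` over `K`, so
`y(S) ∈ K(x(R), y(R))`. Conversely, let `L = K(x(R), y(S))`. Since `y(R)² = x(R)³ + A x(R) + B ∈ L`,
if `y(R) ∉ L` some automorphism of `K̄` over `L` sends `y(R)` to `-y(R)`; it fixes `x(R)`, so it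
maps `R` to `-R` and hence `S` to `-S`. As it also fixes `y(S)`, we get `S = -S`, i.e. `2 • S = 0`,
impossible because `0 < 2 (m / d) < m` when `d ≥ 3`. Finally `S` is a `d`-torsion point, so
`y(S) ∈ K` once `K(E[d]) = K`.
-/

open Polynomial in
theorem IntermediateField.exists_algEquiv_apply_eq_neg_of_sq_mem {K F : Type*} [Field K]
    [Field F] [Algebra K F] [Normal K F] (E : IntermediateField K F) {y : F} (hsq : y ^ 2 ∈ E)
    (hy : y ∉ E) : ∃ σ : F ≃ₐ[E] F, σ y = -y := by
  have := Normal.tower_top_of_normal K E F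
  have hirr : Irreducible (X ^ 2 - C (⟨y ^ 2, hsq⟩ : E)) := by
    refine X_pow_sub_C_irreducible_of_prime Nat.prime_two fun b hb ↦ hy ?_
    have hyb : y ^ 2 = (b : F) ^ 2 := by simpa using (congrArg Subtype.val hb).symm
    rcases sq_eq_sq_iff_eq_or_eq_neg.mp hyb with h | h
    · exact h ▸ b.2
    · exact h ▸ neg_mem b.2
  have hmin : minpoly E y = X ^ 2 - C ⟨y ^ 2, hsq⟩ :=
    (minpoly.eq_of_irreducible_of_monic hirr (by simp [IntermediateField.algebraMap_apply])
      (monic_X_pow_sub_C _ two_ne_zero)).symm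
  exact minpoly.exists_algEquiv_of_root' (Algebra.IsAlgebraic.isAlgebraic y)
    (by simp [hmin, IntermediateField.algebraMap_apply])

theorem IntermediateField.adjoin_pair_eq_adjoin_singleton {K F : Type*} [Field K] [Field F]
    [Algebra K F] (x : F) {y : F} (hy : y ∈ (⊥ : IntermediateField K F)) :
    adjoin K {x, y} = adjoin K {x} := by
  rw [Set.insert_eq, adjoin_union, adjoin_simple_eq_bot_iff.mpr hy, sup_bot_eq]

open scoped WeierstrassCurve.Affine

theorem baseW_eq_baseChange (K F : Type*) [Field K] [Field F] [Algebra K F] (A B : K) :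
    baseW K F A B = (⟨0, 0, 0, A, B⟩ : WeierstrassCurve K)⁄F := by
  ext <;> simp [baseW]

namespace WeierstrassCurve.Affine

variable {K F : Type*} [Field K] [Field F] [Algebra K F] {W : Affine K}

theorem Point.coords_mem_of_nsmul_eq_some [DecidableEq F] (L : IntermediateField K F)
    {x y x' y' : F} (h : (W⁄F).Nonsingular x y) (h' : (W⁄F).Nonsingular x' y')
    (hx : x ∈ L) (hy : y ∈ L) (n : ℕ) (hn : n • Point.some _ _ h = .some _ _ h') :
    x' ∈ L ∧ y' ∈ L := by
  have hL : (W⁄L).Nonsingular ⟨x, hx⟩ ⟨y, hy⟩ :=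
    (W.baseChange_nonsingular L.val.injective ..).mp h
  have hmap : Point.map L.val (n • Point.some _ _ hL) = .some _ _ h' := by
    rw [map_nsmul, ← hn]; rfl
  rcases hP : n • Point.some _ _ hL with _ | ⟨hQ⟩
  · rw [hP] at hmap; exact absurd hmap.symm (Point.some_ne_zero h')
  · rw [hP, Point.map_some, Point.some.injEq] at hmap
    exact ⟨hmap.1 ▸ SetLike.coe_mem _, hmap.2 ▸ SetLike.coe_mem _⟩

variable (ha₁ : W.a₁ = 0) (ha₃ : W.a₃ = 0)
include ha₁ ha₃

theorem negY_baseChange_eq_neg (x y : F) : (W⁄F).negY x y = -y := by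
  simp [negY, ha₁, ha₃]

theorem sq_mem_of_equation_baseChange (L : IntermediateField K F) {x y : F}
    (h : (W⁄F).Equation x y) (hx : x ∈ L) : y ^ 2 ∈ L := by
  rw [equation_iff] at h
  simp only [baseChange_a₁, baseChange_a₂, baseChange_a₃, baseChange_a₄, baseChange_a₆, ha₁, ha₃,
    map_zero, zero_mul, add_zero] at h
  rw [h]
  exact add_mem (add_mem (add_mem (pow_mem hx 3) (mul_mem (L.algebraMap_mem _) (pow_mem hx 2)))
    (mul_mem (L.algebraMap_mem _) hx)) (L.algebraMap_mem _)

variable [DecidableEq F]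

theorem Point.map_some_eq_neg (σ : F →ₐ[K] F) {x y : F} (h : (W⁄F).Nonsingular x y)
    (hx : σ x = x) (hy : σ y = -y) : Point.map σ (.some _ _ h) = -Point.some _ _ h := by
  simp only [Point.map_some, Point.neg_some, hx, hy, negY_baseChange_eq_neg ha₁ ha₃]

variable [Normal K F]

theorem Point.y_mem_of_nsmul_eq_some (E : IntermediateField K F) {x y x' y' : F}
    (h : (W⁄F).Nonsingular x y) (h' : (W⁄F).Nonsingular x' y') (n : ℕ)
    (hn : n • Point.some _ _ h = .some _ _ h') (h2 : 2 • Point.some _ _ h' ≠ 0)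
    (hx : x ∈ E) (hy' : y' ∈ E) : y ∈ E := by
  by_contra hy
  obtain ⟨σ, hσ⟩ :=
    E.exists_algEquiv_apply_eq_neg_of_sq_mem (sq_mem_of_equation_baseChange ha₁ ha₃ E h.1 hx) hy
  let f : F →ₐ[K] F := (σ.restrictScalars K).toAlgHom
  have hS : Point.map f (.some _ _ h') = -Point.some _ _ h' := by
    rw [← hn, map_nsmul, Point.map_some_eq_neg ha₁ ha₃ f h (σ.commutes ⟨x, hx⟩) hσ, smul_neg]
  rw [Point.map_some, Point.neg_some, Point.some.injEq, negY_baseChange_eq_neg ha₁ ha₃] at hS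
  have hy'neg : y' = -y' := (σ.commutes ⟨y', hy'⟩).symm.trans hS.2
  apply h2
  rw [two_nsmul, add_eq_zero_iff_eq_neg, Point.neg_some]
  simp only [Point.some.injEq, negY_baseChange_eq_neg ha₁ ha₃, true_and]
  exact hy'neg

theorem Point.adjoin_eq_adjoin_of_nsmul_eq_some {x y x' y' : F}
    (h : (W⁄F).Nonsingular x y) (h' : (W⁄F).Nonsingular x' y') (n : ℕ)
    (hn : n • Point.some _ _ h = .some _ _ h') (h2 : 2 • Point.some _ _ h' ≠ 0) :
    IntermediateField.adjoin K {x, y} = IntermediateField.adjoin K {x, y'} := by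
  have hxy := IntermediateField.subset_adjoin K {x, y}
  have hxy' := IntermediateField.subset_adjoin K {x, y'}
  apply le_antisymm <;> rw [IntermediateField.adjoin_le_iff, Set.insert_subset_iff,
    Set.singleton_subset_iff]
  · exact ⟨hxy' (.inl rfl), Point.y_mem_of_nsmul_eq_some ha₁ ha₃ _ h h' n hn h2 (hxy' (.inl rfl))
      (hxy' (.inr rfl))⟩
  · exact ⟨hxy (.inl rfl), (Point.coords_mem_of_nsmul_eq_some _ h h' (hxy (.inl rfl))
      (hxy (.inr rfl)) n hn).2⟩

end WeierstrassCurve.Affine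

open WeierstrassCurve.Affine

open Classical in
theorem stmt12_general (K : Type*) [Field K]
    (Kbar : Type*) [Field Kbar] [Algebra K Kbar] [IsAlgClosure K Kbar]
    (A B : K)
    (m : ℕ) (hm : 2 ≤ m)
    (d : ℕ) (hd3 : 3 ≤ d) (hdm : d ∣ m)
    (xR yR : Kbar) (hR : (baseW K Kbar A B).Nonsingular xR yR)
    (hord : addOrderOf (WeierstrassCurve.Affine.Point.some _ _ hR) = m) :
    (∃ (x' y' : Kbar) (h' : (baseW K Kbar A B).Nonsingular x' y'),
      (m / d) • WeierstrassCurve.Affine.Point.some _ _ hR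
          = WeierstrassCurve.Affine.Point.some _ _ h' ∧
        IntermediateField.adjoin K {xR, yR} = IntermediateField.adjoin K {xR, y'}) ∧
    (torsionField K (baseW K Kbar A B) d = ⊥ →
      IntermediateField.adjoin K {xR, yR} = IntermediateField.adjoin K {xR}) := by
  revert hR
  rw [baseW_eq_baseChange]
  intro hR hord
  have hdk : d * (m / d) = m := Nat.mul_div_cancel' hdm
  have hk : 0 < m / d := Nat.div_pos (Nat.le_of_dvd (by omega) hdm) (by omega)
  have nsmul_ne_zero {n : ℕ} (hn0 : 0 < n) (hnm : n < m) : n • Point.some _ _ hR ≠ 0 := by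
    rw [ne_eq, ← addOrderOf_dvd_iff_nsmul_eq_zero, hord]
    exact Nat.not_dvd_of_pos_of_lt hn0 hnm
  rcases hS : (m / d) • Point.some _ _ hR with _ | @⟨x', y', h'⟩
  · exact absurd hS (nsmul_ne_zero hk (Nat.div_lt_self (by omega) (by omega)))
  have h2S : 2 • Point.some _ _ h' ≠ 0 := by
    rw [← hS, smul_smul]
    exact nsmul_ne_zero (by omega) (by nlinarith)
  have hEq := Point.adjoin_eq_adjoin_of_nsmul_eq_some rfl rfl hR h' _ hS h2S
  refine ⟨⟨x', y', h', rfl, hEq⟩, fun hbot ↦ hEq.trans ?_⟩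
  have hdS : d • Point.some _ _ h' = 0 := by
    rw [← hS, smul_smul, hdk, ← hord, addOrderOf_nsmul_eq_zero]
  have hy' : y' ∈ torsionField K ((⟨0, 0, 0, A, B⟩ : WeierstrassCurve K)⁄Kbar) d :=
    IntermediateField.subset_adjoin _ _ ⟨x', y', h', hdS, .inr rfl⟩
  exact IntermediateField.adjoin_pair_eq_adjoin_singleton xR (hbot ▸ hy')

open Classical in
/-- If `d ≥ 3` divides `m` and `R` has exact order `m`, then
`K(x(R), y(R)) = K(x(R), y((m/d)·R))`; in particular if `K = K(E[d])` then
`K(x(R), y(R)) = K(x(R))`. -/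
theorem stmt12 (K : Type*) [Field K] (hchar2 : (2 : K) ≠ 0) (hchar3 : (3 : K) ≠ 0)
    (Kbar : Type*) [Field Kbar] [Algebra K Kbar] [IsAlgClosure K Kbar]
    (A B : K) (hΔ : 4 * A ^ 3 + 27 * B ^ 2 ≠ 0)
    (m : ℕ) (hm : 2 ≤ m) (hmchar : (m : K) ≠ 0)
    (d : ℕ) (hd3 : 3 ≤ d) (hdm : d ∣ m)
    (xR yR : Kbar) (hR : (baseW K Kbar A B).Nonsingular xR yR)
    (hord : addOrderOf (WeierstrassCurve.Affine.Point.some _ _ hR) = m) :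
    (∃ (x' y' : Kbar) (h' : (baseW K Kbar A B).Nonsingular x' y'),
      (m / d) • WeierstrassCurve.Affine.Point.some _ _ hR
          = WeierstrassCurve.Affine.Point.some _ _ h' ∧
        IntermediateField.adjoin K {xR, yR} = IntermediateField.adjoin K {xR, y'}) ∧
    (torsionField K (baseW K Kbar A B) d = ⊥ →
      IntermediateField.adjoin K {xR, yR} = IntermediateField.adjoin K {xR}) :=
  stmt12_general K Kbar A B m hm d hd3 hdm xR yR hR hord
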